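/- arXiv:2507.07619 — 3 statements merged into one kernel-verified Lean document; each statement's English description precedes it below -/
import Mathlib

section
/- Let (p̲_k, p̄_k)_{k=1}^m be a coherent probability interval on a set of size m with Δ = S̄ + (m−2)S̲ − (m−1) < 0, and fix an index j ∈ {1,…,m}. Then there exist nonnegative numbers t_k for k ≠ j with t_k ≤ 1 − S̲ − (p̄_k − p̲_k) for each k ≠ j and Σ_{k≠j} t_k = −Δ; consequently the interval (p̲_k, q̄_k)_{k=1}^m with q̄_j = p̄_j and q̄_k = p̄_k + t_k for k ≠ j is a good coherent probability interval with the same lower bounds and with the j-th upper bound unchanged. -/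
open Finset

/-- A Dempster–Shafer mass function on the finite type `α`:
nonnegative, at most one, vanishing on `∅`, and summing to one. -/
def IsMass {α : Type*} [Fintype α] [DecidableEq α] (m : Finset α → ℝ) : Prop :=
  m ∅ = 0 ∧ (∀ V : Finset α, 0 ≤ m V ∧ m V ≤ 1) ∧ (∑ V : Finset α, m V) = 1

/-- The belief function associated to a mass function: `Bel m W = ∑_{V ⊆ W} m V`. -/
def Bel {α : Type*} [Fintype α] [DecidableEq α] (m : Finset α → ℝ) (W : Finset α) : ℝ :=
  ∑ V ∈ Finset.univ.filter (fun V : Finset α => V ⊆ W), m V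

/-- The plausibility function associated to a mass function:
`Pl m W = ∑_{V ∩ W ≠ ∅} m V`. -/
def Pl {α : Type*} [Fintype α] [DecidableEq α] (m : Finset α → ℝ) (W : Finset α) : ℝ :=
  ∑ V ∈ Finset.univ.filter (fun V : Finset α => (V ∩ W).Nonempty), m V

/-- A coherent probability interval `(lo i, hi i)_{i}` on `Fin n`:
componentwise bounds `0 ≤ lo ≤ hi ≤ 1`, together with [Coh1], [Coh2], [Coh3]. -/
def IsCoherent {n : ℕ} (lo hi : Fin n → ℝ) : Prop :=
  (∀ i, 0 ≤ lo i ∧ lo i ≤ hi i ∧ hi i ≤ 1) ∧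
  (∑ i, lo i) ≤ 1 ∧ 1 ≤ (∑ i, hi i) ∧
  (∀ i, 1 - ∑ h ∈ Finset.univ.erase i, hi h ≤ lo i) ∧
  (∀ i, hi i ≤ 1 - ∑ h ∈ Finset.univ.erase i, lo h)

/-- `Δ = S̄ + (n-2)S̲ - (n-1)` for a probability interval. -/
def intervalDelta {n : ℕ} (lo hi : Fin n → ℝ) : ℝ :=
  (∑ i, hi i) + ((n : ℝ) - 2) * (∑ i, lo i) - ((n : ℝ) - 1)

/-- A *good* coherent probability interval: coherent and `Δ ≥ 0`. -/
def IsGood {n : ℕ} (lo hi : Fin n → ℝ) : Prop :=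
  IsCoherent lo hi ∧ 0 ≤ intervalDelta lo hi

/-- The standard good mass (SGM) associated to a (good coherent) probability interval:
mass `lo i` on each singleton `{a_i}`, mass `1 - hi i - ∑_{h ≠ i} lo h` on each
complement `univ ∖ {a_i}`, mass `Δ` on `univ`, and `0` on every other set. -/
def SGM {n : ℕ} (lo hi : Fin n → ℝ) (V : Finset (Fin n)) : ℝ :=
  (∑ i ∈ Finset.univ.filter (fun i : Fin n => V = {i}), lo i)
  + (∑ i ∈ Finset.univ.filter (fun i : Fin n => V = Finset.univ \ {i}),
      (1 - hi i - ∑ h ∈ Finset.univ.erase i, lo h))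
  + (if V = Finset.univ then intervalDelta lo hi else 0)

/-!
Raising the upper bound `hi k` by at most its slack `1 - S̲ - (hi k - lo k)` keeps the
interval coherent, and raises `Δ` by exactly the amount added. The slacks of the indices
`k ≠ j` add up to `-Δ + (hi j - lo j) ≥ -Δ`, so scaling all of them by the common factor
`-Δ / ∑_{k ≠ j} slack k ∈ [0, 1]` gives increments that bring `Δ` up to `0`.
-/

theorem Finset.exists_nonneg_le_sum_eq {ι K : Type*} [Field K] [LinearOrder K]
    [IsStrictOrderedRing K] (s : Finset ι) {c : ι → K} (hc : ∀ k ∈ s, 0 ≤ c k) {T : K}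
    (hT : 0 ≤ T) (hTc : T ≤ ∑ k ∈ s, c k) :
    ∃ t : ι → K, (∀ k ∈ s, 0 ≤ t k ∧ t k ≤ c k) ∧ (∀ k ∉ s, t k = 0) ∧
      ∑ k ∈ s, t k = T := by
  set C := ∑ k ∈ s, c k
  have hC : 0 ≤ C := sum_nonneg hc
  have hr : T / C ≤ 1 := div_le_one_of_le₀ hTc hC
  refine ⟨(s : Set ι).indicator fun k => T / C * c k, fun k hk => ?_,
    fun k hk => Set.indicator_of_notMem (mod_cast hk) _, ?_⟩
  · rw [Set.indicator_of_mem (mod_cast hk)]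
    exact ⟨mul_nonneg (div_nonneg hT hC) (hc k hk), mul_le_of_le_one_left (hc k hk) hr⟩
  · rw [sum_congr rfl fun k hk => Set.indicator_of_mem (mod_cast hk) _, ← mul_sum]
    rcases hC.eq_or_lt with hC0 | hC0
    · rw [← hC0, div_zero, zero_mul]
      exact (hTc.trans hC0.ge).antisymm hT |>.symm
    · exact div_mul_cancel₀ T hC0.ne'

section ProbabilityInterval

variable {n : ℕ} (lo hi : Fin n → ℝ)

/-- How far `hi k` can be raised before [Coh3] fails at `k`. -/
def upperSlack (k : Fin n) : ℝ :=
  1 - (∑ h, lo h) - (hi k - lo k)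

theorem upperSlack_eq (k : Fin n) :
    upperSlack lo hi k = 1 - (∑ h ∈ univ.erase k, lo h) - hi k := by
  rw [upperSlack, sum_erase_eq_sub (mem_univ k)]
  ring

theorem sum_upperSlack : ∑ k, upperSlack lo hi k = (1 - ∑ h, lo h) - intervalDelta lo hi := by
  simp only [upperSlack, intervalDelta, sum_sub_distrib, sum_const, card_univ, Fintype.card_fin,
    nsmul_eq_mul]
  ring

theorem sum_erase_upperSlack (j : Fin n) :
    ∑ k ∈ univ.erase j, upperSlack lo hi k = -intervalDelta lo hi + (hi j - lo j) := by
  rw [sum_erase_eq_sub (mem_univ j), sum_upperSlack, upperSlack]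
  ring

theorem intervalDelta_add_hi (t : Fin n → ℝ) :
    intervalDelta lo (fun k => hi k + t k) = intervalDelta lo hi + ∑ k, t k := by
  simp only [intervalDelta, sum_add_distrib]
  ring

variable {lo hi}

theorem IsCoherent.upperSlack_nonneg (h : IsCoherent lo hi) (k : Fin n) :
    0 ≤ upperSlack lo hi k := by
  rw [upperSlack_eq]
  linarith [h.2.2.2.2 k]

theorem IsCoherent.add_hi (h : IsCoherent lo hi) {t : Fin n → ℝ}
    (ht : ∀ k, 0 ≤ t k ∧ t k ≤ upperSlack lo hi k) :
    IsCoherent lo (fun k => hi k + t k) := by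
  obtain ⟨hbounds, hlo, hhi, hcoh2, -⟩ := h
  have hcoh3 (k : Fin n) : hi k + t k ≤ 1 - ∑ h ∈ univ.erase k, lo h := by
    linarith [upperSlack_eq lo hi k ▸ (ht k).2]
  refine ⟨fun k => ⟨(hbounds k).1, ?_, ?_⟩, hlo, ?_, fun k => ?_, hcoh3⟩
  · linarith [(hbounds k).2.1, (ht k).1]
  · linarith [hcoh3 k, sum_nonneg fun h (_ : h ∈ univ.erase k) => (hbounds h).1]
  · linarith [sum_add_distrib (s := univ) (f := hi) (g := t),
      sum_nonneg fun k (_ : k ∈ univ) => (ht k).1]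
  · linarith [hcoh2 k, sum_add_distrib (s := univ.erase k) (f := hi) (g := t),
      sum_nonneg fun h (_ : h ∈ univ.erase k) => (ht h).1]

end ProbabilityInterval

/-- Let `(lo, hi)` be a bad coherent probability interval on
`Fin m` (i.e. `Δ < 0`) and fix an index `j`. Then there are nonnegative numbers
`t k` for `k ≠ j`, each at most `1 - S̲ - (hi k - lo k)`, summing to `-Δ`, such
that enlarging the upper bounds by `t` (leaving `hi j` and all lower bounds
unchanged) yields a good coherent probability interval. -/
theorem bad_interval_fixing (m : ℕ) (lo hi : Fin m → ℝ)
    (hcoh : IsCoherent lo hi) (hbad : intervalDelta lo hi < 0) (j : Fin m) :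
    ∃ t : Fin m → ℝ, t j = 0 ∧
      (∀ k, k ≠ j → 0 ≤ t k ∧ t k ≤ 1 - (∑ h, lo h) - (hi k - lo k)) ∧
      (∑ k ∈ Finset.univ.erase j, t k) = -intervalDelta lo hi ∧
      IsGood lo (fun k => hi k + t k) := by
  have hdeficit : -intervalDelta lo hi ≤ ∑ k ∈ univ.erase j, upperSlack lo hi k := by
    rw [sum_erase_upperSlack]
    linarith [(hcoh.1 j).2.1]
  obtain ⟨t, hbound, hzero, hsum⟩ :=
    (univ.erase j).exists_nonneg_le_sum_eq (fun k _ => hcoh.upperSlack_nonneg k)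
      (neg_nonneg.mpr hbad.le) hdeficit
  have htj : t j = 0 := hzero j (notMem_erase j univ)
  have hbound' (k : Fin m) (hk : k ≠ j) : 0 ≤ t k ∧ t k ≤ upperSlack lo hi k :=
    hbound k (mem_erase.mpr ⟨hk, mem_univ k⟩)
  refine ⟨t, htj, hbound', hsum, hcoh.add_hi fun k => ?_, ?_⟩
  · rcases eq_or_ne k j with rfl | hk
    · exact ⟨htj.ge, htj ▸ hcoh.upperSlack_nonneg k⟩
    · exact hbound' k hk
  · rw [intervalDelta_add_hi, ← sum_erase univ htj, hsum, add_neg_cancel]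
end

section
/- Consider a chain A → B → C with finite state spaces E_A = {a_1,…,a_n}, E_B = {b_1,…,b_m}, E_C = {c_1,…,c_l}. Suppose given: numbers p̲^i_j ≤ p̄^i_j in [0,1] for each i, j (bounds for P(b_j|a_i)); numbers p̲^j_k ≤ p̄^j_k in [0,1] for each j, k (bounds for P(c_k|b_j)); and a probability interval (p̲^B_j, p̄^B_j)_{j=1}^m on E_B which is good and coherent and is conservative for the credal marginal on B, i.e. for every j, p̲^B_j ≤ min Σ_{i=1}^n x_i y^i_j and p̄^B_j ≥ max Σ_{i=1}^n x_i y^i_j over all x_i ∈ [p̲^A_i, p̄^A_i] with Σ_i x_i = 1 and y^i_j ∈ [p̲^i_j, p̄^i_j], where (p̲^A_i, p̄^A_i)_{i=1}^n is a coherent probability interval on E_A. Let m_B be the standard good mass associated to (p̲^B, p̄^B), and for each k define p̲^C_k = Σ_{W ⊆ E_B} m_B(W) ∏_{j : b_j ∈ W} p̲^j_k. Then p̲^C_k ≤ min Σ_{i,j} x_i y^i_j z^j_k, where the minimum is over all x_i ∈ [p̲^A_i, p̄^A_i] with Σ_i x_i = 1, all y^i_j ∈ [p̲^i_j, p̄^i_j]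 with Σ_j y^i_j = 1 for each i, and all z^j_k ∈ [p̲^j_k, p̄^j_k]. -/
open Finset

lemma sgm_expand {n : ℕ} (lo hi : Fin n → ℝ) (P : Finset (Fin n) → ℝ) :
    (∑ W : Finset (Fin n), SGM lo hi W * P W)
      = (∑ i, lo i * P {i})
        + (∑ i, (1 - hi i - ∑ h ∈ Finset.univ.erase i, lo h) * P (Finset.univ \ {i}))
        + intervalDelta lo hi * P Finset.univ := by
  unfold SGM
  simp only [add_mul, Finset.sum_add_distrib, Finset.sum_mul, Finset.sum_filter,
    ite_mul, zero_mul]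
  congr 1
  · congr 1
    · rw [Finset.sum_comm]
      refine Finset.sum_congr rfl fun i _ => ?_
      simp [Finset.sum_ite_eq]
    · rw [Finset.sum_comm]
      refine Finset.sum_congr rfl fun i _ => ?_
      simp [Finset.sum_ite_eq]
  · simp [Finset.sum_ite_eq]

lemma sgm_core (m : ℕ) (hm : 0 < m) (loB hiB q L : Fin m → ℝ)
    (hcoh3 : ∀ j, hiB j ≤ 1 - ∑ h ∈ Finset.univ.erase j, loB h)
    (hΔ : 0 ≤ intervalDelta loB hiB)
    (hql : ∀ j, loB j ≤ q j) (hqh : ∀ j, q j ≤ hiB j)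
    (hqs : ∑ j, q j = 1)
    (hL0 : ∀ j, 0 ≤ L j) (hL1 : ∀ j, L j ≤ 1) :
    (∑ i, loB i * L i)
      + (∑ i, (1 - hiB i - ∑ h ∈ Finset.univ.erase i, loB h) * ∏ h ∈ Finset.univ.erase i, L h)
      + intervalDelta loB hiB * ∏ j, L j ≤ ∑ j, q j * L j := by
  classical
  obtain ⟨j0, -, hj0⟩ := Finset.exists_min_image Finset.univ L ⟨⟨0, hm⟩, mem_univ _⟩
  set t := L j0 with ht
  set Q := ∏ h ∈ Finset.univ.erase j0, L h with hQ
  set c : Fin m → ℝ := fun j => 1 - hiB j - ∑ h ∈ Finset.univ.erase j, loB h with hc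
  have hc0 : ∀ j, 0 ≤ c j := fun j => by have := hcoh3 j; simp only [hc]; linarith
  have hprodle : ∀ (s : Finset (Fin m)) (a : Fin m), a ∈ s → (∏ h ∈ s, L h) ≤ L a := by
    intro s a ha
    rw [← Finset.mul_prod_erase s L ha]
    exact mul_le_of_le_one_right (hL0 a) (Finset.prod_le_one (fun h _ => hL0 h) (fun h _ => hL1 h))
  have herase : ∀ j : Fin m, ∑ h ∈ Finset.univ.erase j, loB h = (∑ h, loB h) - loB j := by
    intro j
    rw [Finset.sum_erase_eq_sub (mem_univ j)]
  -- bound the complement terms for j ≠ j0 by t, and the univ term by t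
  have hPj : ∀ j ∈ Finset.univ.erase j0, c j * (∏ h ∈ Finset.univ.erase j, L h) ≤ c j * t := by
    intro j hj
    have hj' : j ≠ j0 := (Finset.mem_erase.mp hj).1
    exact mul_le_mul_of_nonneg_left
      (hprodle _ j0 (Finset.mem_erase.mpr ⟨hj'.symm, mem_univ _⟩)) (hc0 j)
  have hT : intervalDelta loB hiB * (∏ j, L j) ≤ intervalDelta loB hiB * t :=
    mul_le_mul_of_nonneg_left (hprodle _ j0 (mem_univ _)) hΔ
  -- split complement sum at j0
  have hsplit : (∑ i, c i * ∏ h ∈ Finset.univ.erase i, L h)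
      = c j0 * Q + ∑ i ∈ Finset.univ.erase j0, c i * ∏ h ∈ Finset.univ.erase i, L h := by
    rw [← Finset.add_sum_erase _ _ (mem_univ j0)]
  have hBbound : (∑ i, c i * ∏ h ∈ Finset.univ.erase i, L h)
      ≤ c j0 * Q + (∑ i ∈ Finset.univ.erase j0, c i) * t := by
    rw [hsplit, Finset.sum_mul]
    exact add_le_add le_rfl (Finset.sum_le_sum hPj)
  -- key inequality : c j0 * (Q - t) ≤ ∑_{j ∈ erase j0} (q j - loB j) * (L j - t)
  have hkey : c j0 * (Q - t) ≤ ∑ j ∈ Finset.univ.erase j0, (q j - loB j) * (L j - t) := by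
    rcases le_total Q t with h | h
    · have : (0:ℝ) ≤ ∑ j ∈ Finset.univ.erase j0, (q j - loB j) * (L j - t) :=
        Finset.sum_nonneg fun j _ =>
          mul_nonneg (by linarith [hql j]) (by linarith [hj0 j (mem_univ j)])
      nlinarith [hc0 j0]
    · have step1 : ∀ j ∈ Finset.univ.erase j0,
          (q j - loB j) * (Q - t) ≤ (q j - loB j) * (L j - t) := by
        intro j hj
        have hQLj : Q ≤ L j := hprodle _ j hj
        have := hql j
        nlinarith
      have step2 : (∑ j ∈ Finset.univ.erase j0, (q j - loB j)) * (Q - t)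
          ≤ ∑ j ∈ Finset.univ.erase j0, (q j - loB j) * (L j - t) := by
        rw [Finset.sum_mul]; exact Finset.sum_le_sum step1
      have hsum_erase : (∑ j ∈ Finset.univ.erase j0, (q j - loB j))
          = (1 - ∑ j, loB j) - (q j0 - loB j0) := by
        rw [Finset.sum_erase_eq_sub (mem_univ j0), Finset.sum_sub_distrib, hqs]
      have hcj0le : c j0 ≤ ∑ j ∈ Finset.univ.erase j0, (q j - loB j) := by
        rw [hsum_erase]
        have h1 := hqh j0
        have h2 : c j0 = 1 - hiB j0 - ∑ h ∈ Finset.univ.erase j0, loB h := rfl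
        have h3 := herase j0
        linarith
      nlinarith [hcj0le, step2]
  -- now put everything together
  have hCid : c j0 + (∑ i ∈ Finset.univ.erase j0, c i) + intervalDelta loB hiB
      = 1 - ∑ j, loB j := by
    have e1 : ∑ i : Fin m, (∑ h ∈ Finset.univ.erase i, loB h)
        = (m : ℝ) * (∑ h, loB h) - ∑ h, loB h := by
      rw [Finset.sum_congr rfl fun i _ => herase i, Finset.sum_sub_distrib, Finset.sum_const,
        card_univ, Fintype.card_fin, nsmul_eq_mul]
    rw [Finset.add_sum_erase _ c (mem_univ j0)]
    simp only [hc]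
    rw [Finset.sum_sub_distrib, Finset.sum_sub_distrib, e1, Finset.sum_const, card_univ,
      Fintype.card_fin, nsmul_eq_mul, mul_one]
    unfold intervalDelta
    ring
  have hRHS : (∑ j, q j * L j) = (∑ i, loB i * L i) + (1 - ∑ j, loB j) * t
      + ∑ j ∈ Finset.univ.erase j0, (q j - loB j) * (L j - t) := by
    have : ∀ j, q j * L j = loB j * L j + (q j - loB j) * t + (q j - loB j) * (L j - t) := by
      intro j; ring
    rw [Finset.sum_congr rfl fun j _ => this j]
    rw [Finset.sum_add_distrib, Finset.sum_add_distrib, ← Finset.sum_mul,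
      Finset.sum_sub_distrib, hqs]
    have hz : ((q j0 - loB j0) * (L j0 - t)) = 0 := by simp [ht]
    rw [← Finset.add_sum_erase _ (fun j => (q j - loB j) * (L j - t)) (mem_univ j0), hz,
      zero_add]
  rw [hRHS]
  have hCid' : (1 - ∑ j, loB j) * t
      = c j0 * t + (∑ i ∈ Finset.univ.erase j0, c i) * t + intervalDelta loB hiB * t := by
    rw [← hCid]; ring
  have hkey' : c j0 * Q - c j0 * t ≤ ∑ j ∈ Finset.univ.erase j0, (q j - loB j) * (L j - t) := by
    rw [← mul_sub]; exact hkey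
  have hB2 : (∑ i, (1 - hiB i - ∑ h ∈ Finset.univ.erase i, loB h) * ∏ h ∈ Finset.univ.erase i, L h)
      = ∑ i, c i * ∏ h ∈ Finset.univ.erase i, L h := rfl
  rw [hB2]
  linarith [hBbound, hT, hkey', hCid']

/-- Chain `A → B → C` with state spaces `Fin n`, `Fin m`, `Fin l`.
Given conditional bounds `loBA/hiBA` for `P(b_j|a_i)`, `loCB/hiCB` for
`P(c_k|b_j)`, a coherent interval `(loA, hiA)` on `A`, and a good coherent interval
`(loB, hiB)` on `B` that is conservative for the credal marginal on `B`, with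
standard good mass `mB = SGM loB hiB`: for each `k`,
`p̲ᶜₖ = ∑_{W ⊆ E_B} mB(W) ∏_{j ∈ W} loCB j k` is below `∑_{i,j} xᵢ yᵢⱼ zⱼ` for
every `xᵢ ∈ [loA i, hiA i]` with `∑ᵢ xᵢ = 1`, every `yᵢⱼ ∈ [loBA i j, hiBA i j]`
with `∑ⱼ yᵢⱼ = 1` for each `i`, and every `zⱼ ∈ [loCB j k, hiCB j k]`. -/
theorem chain_lower_bound (n m l : ℕ)
    (loA hiA : Fin n → ℝ) (hA : IsCoherent loA hiA)
    (loBA hiBA : Fin n → Fin m → ℝ)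
    (hBA : ∀ i j, 0 ≤ loBA i j ∧ loBA i j ≤ hiBA i j ∧ hiBA i j ≤ 1)
    (loCB hiCB : Fin m → Fin l → ℝ)
    (hCB : ∀ j k, 0 ≤ loCB j k ∧ loCB j k ≤ hiCB j k ∧ hiCB j k ≤ 1)
    (loB hiB : Fin m → ℝ) (hB : IsGood loB hiB)
    (hcons : ∀ (j : Fin m) (x : Fin n → ℝ) (y : Fin n → ℝ),
      (∀ i, loA i ≤ x i ∧ x i ≤ hiA i) → (∑ i, x i) = 1 →
      (∀ i, loBA i j ≤ y i ∧ y i ≤ hiBA i j) →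
      loB j ≤ (∑ i, x i * y i) ∧ (∑ i, x i * y i) ≤ hiB j)
    (k : Fin l)
    (x : Fin n → ℝ) (hx : ∀ i, loA i ≤ x i ∧ x i ≤ hiA i) (hxs : (∑ i, x i) = 1)
    (y : Fin n → Fin m → ℝ) (hy : ∀ i j, loBA i j ≤ y i j ∧ y i j ≤ hiBA i j)
    (hys : ∀ i, (∑ j, y i j) = 1)
    (z : Fin m → ℝ) (hz : ∀ j, loCB j k ≤ z j ∧ z j ≤ hiCB j k) :
    (∑ W : Finset (Fin m), SGM loB hiB W * ∏ j ∈ W, loCB j k)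
      ≤ ∑ i, ∑ j, x i * y i j * z j := by
  classical
  rcases Nat.eq_zero_or_pos n with hn | hn
  · subst hn; simp at hxs
  rcases Nat.eq_zero_or_pos m with hm | hm
  · exact absurd (hys ⟨0, hn⟩) (by subst hm; simp)
  set L : Fin m → ℝ := fun j => loCB j k with hL
  have hL0 : ∀ j, 0 ≤ L j := fun j => (hCB j k).1
  have hL1 : ∀ j, L j ≤ 1 := fun j => le_trans (hCB j k).2.1 (hCB j k).2.2
  set q : Fin m → ℝ := fun j => ∑ i, x i * y i j with hq
  have hqlh : ∀ j, loB j ≤ q j ∧ q j ≤ hiB j := fun j =>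
    hcons j x (fun i => y i j) hx hxs (fun i => hy i j)
  have hqs : ∑ j, q j = 1 := by
    rw [Finset.sum_comm]
    calc ∑ i, ∑ j, x i * y i j = ∑ i, x i * ∑ j, y i j := by
          simp [Finset.mul_sum]
      _ = 1 := by simp only [hys, mul_one]; exact hxs
  have hRHS : (∑ i, ∑ j, x i * y i j * z j) = ∑ j, q j * z j := by
    rw [Finset.sum_comm]
    refine Finset.sum_congr rfl fun j _ => ?_
    rw [Finset.sum_mul]
  have hstep : (∑ j, q j * L j) ≤ ∑ j, q j * z j := by
    refine Finset.sum_le_sum fun j _ => ?_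
    have hq0 : 0 ≤ q j := le_trans (hB.1.1 j).1 (hqlh j).1
    exact mul_le_mul_of_nonneg_left (hz j).1 hq0
  rw [hRHS]
  refine le_trans ?_ hstep
  rw [sgm_expand loB hiB (fun W => ∏ j ∈ W, L j)]
  have hsd : ∀ i : Fin m, (Finset.univ \ {i} : Finset (Fin m)) = Finset.univ.erase i := by
    intro i; rw [← Finset.erase_eq]
  simp only [hsd, Finset.prod_singleton]
  exact sgm_core m hm loB hiB q L hB.1.2.2.2.2 hB.2
    (fun j => (hqlh j).1) (fun j => (hqlh j).2) hqs hL0 hL1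
end

section
/- Let (p̲^A_i, p̄^A_i)_{i=1}^n be a coherent probability interval on E_A = {a_1,…,a_n}, fix an index j, and let p̲^i_j ≤ p̄^i_j in [0,1] be given for each i = 1,…,n. Denote by p̲^{(2)}_j the second smallest value among {p̲^1_j,…,p̲^n_j}. Let m_A be any mass function on E_A satisfying Bel_{m_A}({a_i}) = p̲^A_i and Pl_{m_A}({a_i}) = p̄^A_i for all i, and such that m_A(V) = 0 for every V ⊆ E_A with |V| ≥ 2 and ∏_{i : a_i ∈ V} p̲^i_j > p̲^{(2)}_j. Then Σ_{V ⊆ E_A} m_A(V) ∏_{i : a_i ∈ V} p̲^i_j ≤ min Σ_{i=1}^n p̲^i_j x_i, where the minimum is over all x_i ∈ [p̲^A_i, p̄^A_i] with Σ_{i=1}^n x_i = 1. -/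
open Finset

lemma list_two {α : Type*} : ∀ (L : List α), 2 ≤ L.length → ∃ a b t, L = a :: b :: t
  | [], h => absurd h (by simp)
  | [a], h => absurd h (by simp)
  | a :: b :: t, _ => ⟨a, b, t, rfl⟩

lemma second_min_le {n : ℕ} (lo : Fin n → ℝ) (i0 i : Fin n) (hne : i ≠ i0)
    (hmin : ∀ k, lo i0 ≤ lo k) :
    ((Finset.univ.val.map lo).sort (· ≤ ·))[1]! ≤ lo i := by
  by_contra hlt
  push_neg at hlt
  have h2n : 2 ≤ n := by
    have : 1 < Fintype.card (Fin n) := Fintype.one_lt_card_iff.mpr ⟨i, i0, hne⟩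
    simp at this; omega
  have hlen : ((Finset.univ.val.map lo).sort (· ≤ ·)).length = n := by
    rw [Multiset.length_sort, Multiset.card_map]
    simp
  obtain ⟨a, b, t, hl⟩ := list_two ((Finset.univ.val.map lo).sort (· ≤ ·)) (by omega)
  have hb : ((Finset.univ.val.map lo).sort (· ≤ ·))[1]! = b := by
    rw [hl]; simp
  rw [hb] at hlt
  have hs := Multiset.pairwise_sort (Finset.univ.val.map lo) (· ≤ ·)
  rw [hl, List.pairwise_cons, List.pairwise_cons] at hs
  have hperm : (↑(a :: b :: t) : Multiset ℝ) = Finset.univ.val.map lo := by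
    rw [← hl]; exact Multiset.sort_eq _ _
  have hc1 : Multiset.countP (fun y => y < b) (↑(a :: b :: t) : Multiset ℝ) ≤ 1 := by
    have ht0 : Multiset.countP (fun y => y < b) (↑t : Multiset ℝ) = 0 :=
      Multiset.countP_eq_zero.mpr (fun y hy => not_lt.mpr (hs.2.1 y (by simpa using hy)))
    rw [show ((a :: b :: t : List ℝ) : Multiset ℝ) = a ::ₘ b ::ₘ ↑t from rfl]
    rw [Multiset.countP_cons, Multiset.countP_cons, ht0]
    split <;> split <;> simp_all
  have hc2 : 2 ≤ Multiset.countP (fun y => y < b) (Finset.univ.val.map lo) := by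
    rw [Multiset.countP_map]
    have hsub : ({i0, i} : Finset (Fin n)) ⊆ Finset.univ.filter (fun k => lo k < b) := by
      intro k hk
      simp only [mem_insert, mem_singleton] at hk
      rcases hk with rfl | rfl <;> simp [lt_of_le_of_lt (hmin i) hlt, hlt]
    have : ({i0, i} : Finset (Fin n)).card ≤ (Finset.univ.filter (fun k => lo k < b)).card :=
      Finset.card_le_card hsub
    rw [Finset.card_pair (Ne.symm hne)] at this
    simpa [Finset.card_def, Finset.filter_val] using this
  rw [hperm] at hc1
  omega

lemma sum_split_aux {n : ℕ} (i0 : Fin n) (f : Finset (Fin n) → ℝ) :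
    (∑ V : Finset (Fin n), f V) =
      f ∅ + (∑ i, f {i})
      + (∑ V ∈ univ.filter (fun V : Finset (Fin n) => i0 ∈ V ∧ 2 ≤ V.card), f V)
      + (∑ V ∈ univ.filter (fun V : Finset (Fin n) => i0 ∉ V ∧ 2 ≤ V.card), f V) := by
  classical
  have h1 := Finset.sum_filter_add_sum_filter_not Finset.univ
    (fun V : Finset (Fin n) => 2 ≤ V.card) f
  have hsmall : Finset.univ.filter (fun V : Finset (Fin n) => ¬ 2 ≤ V.card)
      = insert ∅ (Finset.univ.image (fun i : Fin n => ({i} : Finset (Fin n)))) := by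
    ext V
    simp only [mem_filter, mem_univ, true_and, mem_insert, mem_image, not_le]
    constructor
    · intro h
      interval_cases h' : V.card
      · exact Or.inl (Finset.card_eq_zero.mp h')
      · obtain ⟨a, rfl⟩ := Finset.card_eq_one.mp h'
        exact Or.inr ⟨a, rfl⟩
    · rintro (rfl | ⟨a, -, rfl⟩) <;> simp
  have hbig := Finset.sum_filter_add_sum_filter_not
    (Finset.univ.filter (fun V : Finset (Fin n) => 2 ≤ V.card))
    (fun V : Finset (Fin n) => i0 ∈ V) f
  rw [Finset.filter_filter, Finset.filter_filter] at hbig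
  have hsum_small : (∑ V ∈ Finset.univ.filter (fun V : Finset (Fin n) => ¬ 2 ≤ V.card), f V)
      = f ∅ + ∑ i, f {i} := by
    rw [hsmall, Finset.sum_insert (by simp), Finset.sum_image Finset.singleton_injective.injOn]
  have e1 : Finset.univ.filter (fun V : Finset (Fin n) => 2 ≤ V.card ∧ i0 ∈ V)
      = univ.filter (fun V : Finset (Fin n) => i0 ∈ V ∧ 2 ≤ V.card) := by
    simp [and_comm]
  have e2 : Finset.univ.filter (fun V : Finset (Fin n) => 2 ≤ V.card ∧ ¬ i0 ∈ V)
      = univ.filter (fun V : Finset (Fin n) => i0 ∉ V ∧ 2 ≤ V.card) := by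
    simp [and_comm]
  rw [e1, e2] at hbig
  linarith [h1, hbig, hsum_small]

theorem adhoc_mass_lower_bound' (n : ℕ) (loA hiA : Fin n → ℝ)
    (lo hi : Fin n → ℝ) (hbd : ∀ i, 0 ≤ lo i ∧ lo i ≤ hi i ∧ hi i ≤ 1)
    (mA : Finset (Fin n) → ℝ)
    (hm : (mA ∅ = 0 ∧ (∀ V : Finset (Fin n), 0 ≤ mA V ∧ mA V ≤ 1) ∧ (∑ V : Finset (Fin n), mA V) = 1))
    (hBel : ∀ i, (∑ V ∈ Finset.univ.filter (fun V : Finset (Fin n) => V ⊆ {i}), mA V) = loA i)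
    (hPl : ∀ i, (∑ V ∈ Finset.univ.filter (fun V : Finset (Fin n) => (V ∩ {i}).Nonempty), mA V) = hiA i)
    (hzero : ∀ V : Finset (Fin n), 2 ≤ V.card →
      ((Finset.univ.val.map lo).sort (· ≤ ·))[1]! < (∏ i ∈ V, lo i) → mA V = 0)
    (x : Fin n → ℝ) (hx : ∀ i, loA i ≤ x i ∧ x i ≤ hiA i) (hxs : (∑ i, x i) = 1) :
    (∑ V : Finset (Fin n), mA V * ∏ i ∈ V, lo i) ≤ ∑ i, lo i * x i := by
  classical
  rcases Nat.eq_zero_or_pos n with hn0 | hn0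
  · exfalso; subst hn0; simpa using hxs
  obtain ⟨i0, -, hi0⟩ := Finset.exists_min_image Finset.univ lo ⟨⟨0, hn0⟩, mem_univ _⟩
  have hmin : ∀ k, lo i0 ≤ lo k := fun k => hi0 k (mem_univ k)
  set p2 : ℝ := ((Finset.univ.val.map lo).sort (· ≤ ·))[1]! with hp2def
  set q : ℝ := max p2 (lo i0) with hqdef
  have hq0 : 0 ≤ q := le_trans (hbd i0).1 (le_max_right _ _)
  have hqle : ∀ i, i ≠ i0 → q ≤ lo i := fun i hi =>
    max_le (second_min_le lo i0 i hi hmin) (hmin i)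
  have hlo1 : ∀ i, lo i ≤ 1 := fun i => le_trans (hbd i).2.1 (hbd i).2.2
  -- singleton masses
  have hsing : ∀ i, mA {i} = loA i := by
    intro i
    have h := hBel i
    have hfilter : Finset.univ.filter (fun V : Finset (Fin n) => V ⊆ {i}) = {∅, {i}} := by
      ext V; simp [Finset.subset_singleton_iff]
    rw [hfilter, Finset.sum_insert
      (by simp only [Finset.mem_singleton]; exact (Finset.singleton_ne_empty i).symm),
      Finset.sum_singleton, hm.1] at h
    linarith
  set B := univ.filter (fun V : Finset (Fin n) => i0 ∈ V ∧ 2 ≤ V.card) with hBdef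
  set C := univ.filter (fun V : Finset (Fin n) => i0 ∉ V ∧ 2 ≤ V.card) with hCdef
  set MB : ℝ := ∑ V ∈ B, mA V with hMBdef
  set MC : ℝ := ∑ V ∈ C, mA V with hMCdef
  -- Pl at i0
  have hMB : loA i0 + MB = hiA i0 := by
    have h := hPl i0
    have hfil : Finset.univ.filter (fun V : Finset (Fin n) => (V ∩ {i0}).Nonempty)
        = insert {i0} B := by
      ext V
      simp only [mem_filter, mem_univ, true_and, mem_insert, hBdef]
      have hmem : (V ∩ ({i0} : Finset (Fin n))).Nonempty ↔ i0 ∈ V := by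
        constructor
        · rintro ⟨y, hy⟩
          rw [Finset.mem_inter, Finset.mem_singleton] at hy
          rcases hy with ⟨hy1, rfl⟩; exact hy1
        · intro hiV; exact ⟨i0, Finset.mem_inter.mpr ⟨hiV, Finset.mem_singleton_self i0⟩⟩
      rw [hmem]
      constructor
      · intro hiV
        by_cases hc : 2 ≤ V.card
        · exact Or.inr ⟨hiV, hc⟩
        · left
          have h1 : V.card = 1 := by
            have := Finset.card_pos.mpr ⟨i0, hiV⟩
            omega
          obtain ⟨a, rfl⟩ := Finset.card_eq_one.mp h1
          rw [Finset.mem_singleton] at hiV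
          rw [hiV]
      · rintro (rfl | ⟨h1, -⟩)
        · exact Finset.mem_singleton_self i0
        · exact h1
    have hnot : ({i0} : Finset (Fin n)) ∉ B := by
      simp [hBdef]
    rw [hfil, Finset.sum_insert hnot, hsing i0] at h
    linarith
  have htot : (∑ i, loA i) + MB + MC = 1 := by
    have h := sum_split_aux i0 mA
    rw [hm.2.2, hm.1] at h
    have hs : (∑ i, mA {i}) = ∑ i, loA i := Finset.sum_congr rfl (fun i _ => hsing i)
    rw [hs] at h
    linarith
  have hMC0 : 0 ≤ MC := Finset.sum_nonneg (fun V _ => (hm.2.1 V).1)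
  -- LHS bound
  have hL : (∑ V : Finset (Fin n), mA V * ∏ i ∈ V, lo i)
      ≤ (∑ i, lo i * loA i) + MB * lo i0 + MC * q := by
    rw [sum_split_aux i0 (fun V => mA V * ∏ i ∈ V, lo i)]
    have h0 : mA ∅ * ∏ i ∈ (∅ : Finset (Fin n)), lo i = 0 := by simp [hm.1]
    have hs1 : (∑ i, mA {i} * ∏ k ∈ ({i} : Finset (Fin n)), lo k) = ∑ i, lo i * loA i := by
      apply Finset.sum_congr rfl
      intro i _
      simp [hsing i, mul_comm]
    have hBle : (∑ V ∈ B, mA V * ∏ i ∈ V, lo i) ≤ MB * lo i0 := by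
      rw [hMBdef, Finset.sum_mul]
      apply Finset.sum_le_sum
      intro V hV
      rw [hBdef, mem_filter] at hV
      have hprod : (∏ i ∈ V, lo i) ≤ lo i0 := by
        rw [← Finset.mul_prod_erase V lo hV.2.1]
        exact mul_le_of_le_one_right (hbd i0).1
          (Finset.prod_le_one (fun i _ => (hbd i).1) (fun i _ => hlo1 i))
      exact mul_le_mul_of_nonneg_left hprod (hm.2.1 V).1
    have hCle : (∑ V ∈ C, mA V * ∏ i ∈ V, lo i) ≤ MC * q := by
      rw [hMCdef, Finset.sum_mul]
      apply Finset.sum_le_sum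
      intro V hV
      rw [hCdef, mem_filter] at hV
      by_cases hV0 : mA V = 0
      · simp [hV0]
      · have h1 : ¬ (p2 < ∏ i ∈ V, lo i) := fun h => hV0 (hzero V hV.2.2 h)
        exact mul_le_mul_of_nonneg_left
          (le_trans (not_lt.mp h1) (le_max_left _ _)) (hm.2.1 V).1
    linarith
  -- RHS bound
  set t : ℝ := x i0 - loA i0 with htdef
  have hxx : (∑ i, lo i * x i) = (∑ i, lo i * loA i) + ∑ i, lo i * (x i - loA i) := by
    rw [← Finset.sum_add_distrib]
    apply Finset.sum_congr rfl
    intros; ring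
  have hsplitx : (∑ i, lo i * (x i - loA i))
      = lo i0 * t + ∑ i ∈ univ.erase i0, lo i * (x i - loA i) :=
    (Finset.add_sum_erase _ _ (mem_univ i0)).symm
  have hsum_er : (∑ i ∈ univ.erase i0, (x i - loA i)) = MB + MC - t := by
    have h1 := Finset.add_sum_erase univ (fun i => x i - loA i) (mem_univ i0)
    have h2 : (∑ i, (x i - loA i)) = 1 - ∑ i, loA i := by
      rw [Finset.sum_sub_distrib, hxs]
    rw [h2] at h1
    linarith
  have hterm : (∑ i ∈ univ.erase i0, q * (x i - loA i))
      ≤ ∑ i ∈ univ.erase i0, lo i * (x i - loA i) := by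
    apply Finset.sum_le_sum
    intro i hi
    exact mul_le_mul_of_nonneg_right (hqle i (Finset.ne_of_mem_erase hi))
      (sub_nonneg.mpr (hx i).1)
  have hqsum : q * (MB + MC - t) ≤ ∑ i ∈ univ.erase i0, lo i * (x i - loA i) := by
    rw [← hsum_er, ← Finset.mul_sum] at *
    exact le_trans (le_of_eq rfl) hterm
  -- final combination
  have ht0 : 0 ≤ t := sub_nonneg.mpr (hx i0).1
  have htMB : t ≤ MB := by
    have := (hx i0).2
    linarith [hMB]
  have hqi0 : lo i0 ≤ q := le_max_right _ _
  have hfin : MB * lo i0 + MC * q ≤ lo i0 * t + q * (MB + MC - t) := by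
    nlinarith [mul_nonneg (sub_nonneg.mpr hqi0) (sub_nonneg.mpr htMB), hMC0]
  linarith [hL, hqsum, hxx, hsplitx]

/-- Let `(loA, hiA)` be a coherent probability interval on
`E_A = Fin n`, fix `j`, and let `lo i ≤ hi i` in `[0,1]` be conditional lower and
upper bounds. Write `p2` for the second smallest value among `{lo i}` (the entry
of index 1 in the sorted list). If `mA` is any mass function on `E_A` with
`Bel({aᵢ}) = loA i` and `Pl({aᵢ}) = hiA i` for all `i`, assigning zero mass to
every `V` with `|V| ≥ 2` and `∏_{i ∈ V} lo i > p2`, then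
`∑_V mA(V) ∏_{i ∈ V} lo i ≤ ∑ᵢ (lo i) xᵢ` for every `xᵢ ∈ [loA i, hiA i]`
with `∑ᵢ xᵢ = 1`. -/
theorem adhoc_mass_lower_bound (n : ℕ) (loA hiA : Fin n → ℝ)
    (hA : IsCoherent loA hiA)
    (lo hi : Fin n → ℝ) (hbd : ∀ i, 0 ≤ lo i ∧ lo i ≤ hi i ∧ hi i ≤ 1)
    (mA : Finset (Fin n) → ℝ) (hm : IsMass mA)
    (hBel : ∀ i, Bel mA {i} = loA i) (hPl : ∀ i, Pl mA {i} = hiA i)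
    (hzero : ∀ V : Finset (Fin n), 2 ≤ V.card →
      ((Finset.univ.val.map lo).sort (· ≤ ·))[1]! < (∏ i ∈ V, lo i) → mA V = 0)
    (x : Fin n → ℝ) (hx : ∀ i, loA i ≤ x i ∧ x i ≤ hiA i) (hxs : (∑ i, x i) = 1) :
    (∑ V : Finset (Fin n), mA V * ∏ i ∈ V, lo i) ≤ ∑ i, lo i * x i := by
  exact adhoc_mass_lower_bound' n loA hiA lo hi hbd mA hm hBel hPl hzero x hx hxs
end
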